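/- Let σ be a 2-form on a (2n−1)-dimensional vector space V over a field K of characteristic 0, with rank σ = 2n−4, and let α₀, α₁ ∈ V* satisfy αᵢ ∧ σ^{n-2} ≠ 0 for i = 0,1 and α₁ ∧ α₀ ∧ σ^{n-2} = 0. Then there exists a nonzero scalar B ∈ K with α₁ ∧ σ^{n-2} = B · (α₀ ∧ σ^{n-2}). -/

import Mathlib

/-!
Write `τ = σ ^ (n - 2)` and let `W` be the set of covectors `a` with `a ∧ τ = 0`. Contracting
`σ ^ (n - 1) = 0` with any vector `c` gives `(n - 1) (c ⌋ σ) ∧ τ = 0`, so every contraction of `σ`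
lies in `W`; Euler's identity `2 σ = ∑ eᵢ ∧ (eᵢ* ⌋ σ)`, taken in a basis adapted to `W`, then shows
that `σ` is a 2-form on `W`, and `τ ≠ 0` forces `dim W ≥ 2n - 4`.

If `α₁ ∉ W + K α₀`, the annihilator of `α₀ ∧ τ` contains `W + K α₀ + K α₁`, which has codimension
at most one. But the identity `∑ eᵢ* ⌋ (eᵢ ∧ x) = (dim - k) x` on `k`-forms shows that a form of
degree `k < dim - 1` annihilated by a hyperplane vanishes, contradicting `α₀ ∧ τ ≠ 0`. Hence
`α₁ = w + B α₀` with `w ∈ W`, and `B ≠ 0` since `α₁ ∧ τ ≠ 0`.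
-/

namespace ExteriorAlgebra

open CliffordAlgebra Module

section CommRing

variable {R M : Type*} [CommRing R] [AddCommGroup M] [Module R M]

local infixl:70 "⌋" => contractLeft (R := R) (M := M) (Q := 0)

theorem ι_mul_ι_anticomm (x y : M) : ι R x * ι R y = -(ι R y * ι R x) :=
  eq_neg_of_add_eq_zero_left (ι_add_mul_swap x y)

theorem ι_mul_ι_mul_anticomm (x y : M) (z : ExteriorAlgebra R M) :
    ι R x * (ι R y * z) = -(ι R y * (ι R x * z)) := by
  rw [← mul_assoc, ← mul_assoc, ← neg_mul, ι_mul_ι_anticomm]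

theorem ι_mul_ι_mul_self (x : M) (z : ExteriorAlgebra R M) : ι R x * (ι R x * z) = 0 := by
  rw [← mul_assoc, ι_sq_zero, zero_mul]

theorem ι_mul_mem_exteriorPower (a : M) {k : ℕ} {x : ExteriorAlgebra R M}
    (hx : x ∈ ⋀[R]^k M) : ι R a * x ∈ ⋀[R]^(k + 1) M := by
  rw [add_comm]
  exact SetLike.mul_mem_graded (by simp) hx

theorem contractLeft_ι_mul_ι (c : Dual R M) (a b : M) :
    c⌋(ι R a * ι R b) = c a • ι R b - c b • ι R a := by
  simp [contractLeft_ι_mul, contractLeft_ι, Algebra.algebraMap_eq_smul_one]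

@[elab_as_elim]
theorem exteriorPower_two_induction_on {C : ExteriorAlgebra R M → Prop} {σ : ExteriorAlgebra R M}
    (hσ : σ ∈ ⋀[R]^2 M) (ι_mul_ι : ∀ u v, C (ι R u * ι R v))
    (add : ∀ x y, C x → C y → C (x + y)) : C σ := by
  rw [exteriorPower, pow_two] at hσ
  refine Submodule.mul_induction_on hσ ?_ add
  rintro _ ⟨u, rfl⟩ _ ⟨v, rfl⟩
  exact ι_mul_ι u v

section TwoForm

variable {σ : ExteriorAlgebra R M} (hσ : σ ∈ ⋀[R]^2 M)
include hσ

theorem exists_ι_eq_contractLeft_of_mem_two (c : Dual R M) : ∃ m, ι R m = c⌋σ := by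
  refine exteriorPower_two_induction_on hσ (fun u v => ?_) ?_
  · exact ⟨c u • v - c v • u, by simp [contractLeft_ι_mul_ι]⟩
  · rintro x y ⟨m₁, h₁⟩ ⟨m₂, h₂⟩
    exact ⟨m₁ + m₂, by rw [map_add, h₁, h₂, map_add]⟩

theorem commute_ι_of_mem_two (a : M) : Commute σ (ι R a) := by
  refine exteriorPower_two_induction_on hσ (fun u v => ?_) (fun _ _ => Commute.add_left)
  rw [Commute, SemiconjBy, ι_mul_ι_mul_anticomm, ι_mul_ι_anticomm a, mul_neg, neg_neg, mul_assoc]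

theorem contractLeft_mul_of_mem_two (c : Dual R M) (x : ExteriorAlgebra R M) :
    c⌋(σ * x) = c⌋σ * x + σ * (c⌋x) := by
  revert x
  refine exteriorPower_two_induction_on hσ (fun u v x => ?_) (fun a b ha hb x => ?_)
  · rw [mul_assoc, contractLeft_ι_mul, contractLeft_ι_mul, contractLeft_ι_mul_ι]
    simp only [mul_sub, sub_mul, mul_smul_comm, smul_mul_assoc, mul_assoc]
    abel
  · rw [add_mul, map_add, ha, hb, map_add, add_mul, add_mul]
    abel

theorem contractLeft_pow_succ_of_mem_two (c : Dual R M) (m : ℕ) :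
    c⌋(σ ^ (m + 1)) = (m + 1) • (c⌋σ * σ ^ m) := by
  obtain ⟨w, hw⟩ := exists_ι_eq_contractLeft_of_mem_two hσ c
  have hcomm : Commute σ (c⌋σ) := hw ▸ commute_ι_of_mem_two hσ w
  induction m with
  | zero => simp
  | succ m ih =>
    rw [pow_succ', contractLeft_mul_of_mem_two hσ, ih, mul_smul_comm, ← mul_assoc, hcomm.eq,
      mul_assoc, ← pow_succ', succ_nsmul' _ (m + 1)]

end TwoForm

section Euler

variable {I : Type*} [Fintype I]

noncomputable def eulerOp (v : I → M) (f : I → Dual R M) :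
    ExteriorAlgebra R M →ₗ[R] ExteriorAlgebra R M :=
  ∑ i, LinearMap.mulLeft R (ι R (v i)) ∘ₗ contractLeft (f i)

theorem eulerOp_apply (v : I → M) (f : I → Dual R M) (x : ExteriorAlgebra R M) :
    eulerOp v f x = ∑ i, ι R (v i) * (f i⌋x) := by
  simp [eulerOp]

variable {v : I → M} {f : I → Dual R M} (hvf : ∀ m, ∑ i, f i m • v i = m)
include hvf

theorem eulerOp_ι_mul (m : M) (x : ExteriorAlgebra R M) :
    eulerOp v f (ι R m * x) = ι R m * x + ι R m * eulerOp v f x := by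
  simp only [eulerOp_apply, contractLeft_ι_mul, mul_sub, mul_smul_comm,
    ι_mul_ι_mul_anticomm _ m, sub_neg_eq_add, Finset.mul_sum]
  rw [Finset.sum_add_distrib]
  congr 1
  simp_rw [← smul_mul_assoc, ← Finset.sum_mul, ← map_smul, ← map_sum, hvf]

theorem eulerOp_ιMulti (k : ℕ) (w : Fin k → M) :
    eulerOp v f (ιMulti R k w) = (k : R) • ιMulti R k w := by
  induction k with
  | zero => simp [eulerOp_apply, ιMulti_zero_apply, contractLeft_one]
  | succ k ih =>
    rw [ιMulti_succ_apply, eulerOp_ι_mul hvf, ih, mul_smul_comm, Nat.cast_succ, add_smul, one_smul,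
      add_comm]

theorem eulerOp_of_mem {k : ℕ} {x : ExteriorAlgebra R M} (hx : x ∈ ⋀[R]^k M) :
    eulerOp v f x = (k : R) • x := by
  rw [← ιMulti_span_fixedDegree] at hx
  induction hx using Submodule.span_induction with
  | mem y hy => obtain ⟨w, rfl⟩ := hy; exact eulerOp_ιMulti hvf k w
  | zero => simp
  | add y z _ _ hy hz => rw [map_add, hy, hz, smul_add]
  | smul c y _ hy => rw [map_smul, hy, smul_comm]

end Euler

theorem sum_coord_contractLeft_ι_mul {I : Type*} [Fintype I] (b : Basis I R M)
    (x : ExteriorAlgebra R M) :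
    ∑ i, b.coord i⌋(ι R (b i) * x) = (Fintype.card I : R) • x - eulerOp b b.coord x := by
  simp [contractLeft_ι_mul, eulerOp_apply, Finset.sum_sub_distrib, Algebra.smul_def]

theorem contractLeft_eq_zero_of_forall_contractLeft_mem [Projective R M]
    {σ : ExteriorAlgebra R M} {W : Submodule R M} (hW : ∀ c, ∃ w ∈ W, ι R w = c⌋σ)
    {d : Dual R M} (hd : ∀ w ∈ W, d w = 0) : d⌋σ = 0 := by
  obtain ⟨w, -, hw⟩ := hW d
  suffices w = 0 by rw [← hw, this, map_zero]
  refine (forall_dual_apply_eq_zero_iff R w).mp fun c => ?_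
  obtain ⟨w', hw'W, hw'⟩ := hW c
  rw [← algebraMap_eq_zero_iff M, ← contractLeft_ι, hw, contractLeft_comm, ← hw', contractLeft_ι,
    hd w' hw'W, map_zero, neg_zero]

def wedgeAnnihilator (x : ExteriorAlgebra R M) : Submodule R M :=
  LinearMap.ker (LinearMap.mulRight R x ∘ₗ ι R)

theorem mem_wedgeAnnihilator {x : ExteriorAlgebra R M} {a : M} :
    a ∈ wedgeAnnihilator x ↔ ι R a * x = 0 :=
  Iff.rfl

theorem wedgeAnnihilator_le_ι_mul (a : M) (x : ExteriorAlgebra R M) :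
    wedgeAnnihilator x ≤ wedgeAnnihilator (ι R a * x) := fun w hw => by
  rw [mem_wedgeAnnihilator, ι_mul_ι_mul_anticomm, mem_wedgeAnnihilator.mp hw, mul_zero, neg_zero]

theorem self_mem_wedgeAnnihilator_ι_mul (a : M) (x : ExteriorAlgebra R M) :
    a ∈ wedgeAnnihilator (ι R a * x) :=
  ι_mul_ι_mul_self a x

end CommRing

section Field

variable {K M : Type*} [Field K] [AddCommGroup M] [Module K M] [FiniteDimensional K M]

local infixl:70 "⌋" => contractLeft (R := K) (M := M) (Q := 0)

theorem map_ι_pow_eq_bot {W : Submodule K M} {m : ℕ} (hm : finrank K W < m) :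
    W.map (ι K) ^ m = ⊥ := by
  have hW : W.map (ι K) = (LinearMap.range (ι K (M := W))).map (map W.subtype).toLinearMap := by
    rw [ι_range_map_map, Submodule.range_subtype]
  have hbot : ⋀[K]^m W = ⊥ := by
    rw [← Submodule.finrank_eq_zero, exteriorPower.finrank_eq, Nat.choose_eq_zero_of_lt hm]
  rw [hW, ← Submodule.map_pow, ← exteriorPower, hbot, Submodule.map_bot]

variable [CharZero K]

theorem eq_zero_of_wedgeAnnihilator_eq_top {k : ℕ} {x : ExteriorAlgebra K M}
    (hx : x ∈ ⋀[K]^k M) (hk : k ≠ finrank K M) (htop : wedgeAnnihilator x = ⊤) : x = 0 := by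
  let b := finBasis K M
  have hb : ∀ m, ∑ i, b.coord i m • b i = m := fun m => by
    simp only [Basis.coord_apply, Basis.sum_repr]
  have key := sum_coord_contractLeft_ι_mul b x
  simp only [mem_wedgeAnnihilator.mp (htop ▸ Submodule.mem_top), map_zero, Finset.sum_const_zero,
    Fintype.card_fin, eulerOp_of_mem hb hx, ← sub_smul] at key
  exact (smul_eq_zero.mp key.symm).resolve_left (sub_ne_zero.mpr (by exact_mod_cast hk.symm))

theorem eq_zero_of_finrank_le_finrank_wedgeAnnihilator_add_one {k : ℕ} {x : ExteriorAlgebra K M}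
    (hx : x ∈ ⋀[K]^k M) (hk : k + 1 < finrank K M)
    (hW : finrank K M ≤ finrank K (wedgeAnnihilator x) + 1) : x = 0 := by
  by_contra hx0
  obtain ⟨ε, hε⟩ : ∃ ε, ε ∉ wedgeAnnihilator x := by
    by_contra! h
    exact hx0 (eq_zero_of_wedgeAnnihilator_eq_top hx (by omega) (eq_top_iff.mpr fun a _ => h a))
  have htop : wedgeAnnihilator x ⊔ K ∙ ε = ⊤ := by
    apply Submodule.eq_top_of_finrank_eq
    have := Submodule.finrank_le (wedgeAnnihilator x ⊔ K ∙ ε)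
    rw [Submodule.finrank_sup_span_singleton hε] at this ⊢
    omega
  refine hε (eq_zero_of_wedgeAnnihilator_eq_top (ι_mul_mem_exteriorPower ε hx) (by omega)
    (top_unique (htop ▸ sup_le (wedgeAnnihilator_le_ι_mul ε x) ?_)))
  exact (Submodule.span_singleton_le_iff_mem _ _).mpr (self_mem_wedgeAnnihilator_ι_mul ε x)

theorem mem_map_ι_sq_of_forall_contractLeft_mem {σ : ExteriorAlgebra K M} (hσ : σ ∈ ⋀[K]^2 M)
    {W : Submodule K M} (hW : ∀ c, ∃ w ∈ W, ι K w = c⌋σ) : σ ∈ W.map (ι K) ^ 2 := by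
  -- Euler's identity for a family adapted to `W ⊕ C`: the coordinates along `C` vanish on `W`,
  -- so they contract `σ` to zero, and the remaining terms are products of two vectors of `W`.
  obtain ⟨C, hWC⟩ := W.exists_isCompl
  set π := W.projection C hWC
  let b := finBasis K M
  have hb : ∀ m, ∑ i, b.coord i m • b i = m := fun m => by
    simp only [Basis.coord_apply, Basis.sum_repr]
  let v : Fin (finrank K M) ⊕ Fin (finrank K M) → M := Sum.elim (fun i => π (b i)) b
  let f : Fin (finrank K M) ⊕ Fin (finrank K M) → Dual K M :=
    Sum.elim b.coord fun i => b.coord i ∘ₗ (LinearMap.id - π)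
  have hvf : ∀ m, ∑ i, f i m • v i = m := fun m => by
    simp only [Fintype.sum_sum_type, v, f, Sum.elim_inl, Sum.elim_inr, LinearMap.comp_apply, hb,
      ← map_smul, ← map_sum]
    simp
  have h2 := eulerOp_of_mem hvf hσ
  have hC : ∀ i, (b.coord i ∘ₗ (LinearMap.id - π))⌋σ = 0 := fun i =>
    contractLeft_eq_zero_of_forall_contractLeft_mem hW fun w hw => by
      simp [π, Submodule.projection_apply_of_mem_left hWC hw]
  simp only [eulerOp_apply, Fintype.sum_sum_type, v, f, Sum.elim_inl, Sum.elim_inr, hC, mul_zero,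
    Finset.sum_const_zero, add_zero, Nat.cast_ofNat] at h2
  rw [pow_two, ← Submodule.smul_mem_iff _ (two_ne_zero (α := K)), ← h2]
  refine Submodule.sum_mem _ fun i _ => Submodule.mul_mem_mul ⟨π (b i), ?_, rfl⟩ ?_
  · exact Submodule.projection_apply_mem hWC _
  · obtain ⟨w, hw, hwσ⟩ := hW (b.coord i)
    exact hwσ ▸ Submodule.mem_map_of_mem hw

theorem le_finrank_wedgeAnnihilator_pow {σ : ExteriorAlgebra K M} (hσ : σ ∈ ⋀[K]^2 M) {m : ℕ}
    (hm : σ ^ m ≠ 0) (hm' : σ ^ (m + 1) = 0) : 2 * m ≤ finrank K (wedgeAnnihilator (σ ^ m)) := by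
  have hW : ∀ c, ∃ w ∈ wedgeAnnihilator (σ ^ m), ι K w = c⌋σ := fun c => by
    obtain ⟨w, hw⟩ := exists_ι_eq_contractLeft_of_mem_two hσ c
    refine ⟨w, ?_, hw⟩
    have h := contractLeft_pow_succ_of_mem_two hσ c m
    rw [hm', map_zero, ← hw, eq_comm, ← Nat.cast_smul_eq_nsmul K, smul_eq_zero] at h
    exact h.resolve_left (Nat.cast_ne_zero.mpr m.succ_ne_zero)
  by_contra! hlt
  apply hm
  rw [← Submodule.mem_bot K, ← map_ι_pow_eq_bot hlt, pow_mul]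
  exact Submodule.pow_mem_pow _ (mem_map_ι_sq_of_forall_contractLeft_mem hσ hW) m

theorem mem_wedgeAnnihilator_sup_span_singleton {k : ℕ} {τ : ExteriorAlgebra K M}
    (hτ : τ ∈ ⋀[K]^k M) (hk : k + 2 < finrank K M)
    (hW : finrank K M ≤ finrank K (wedgeAnnihilator τ) + 3) {α₀ α₁ : M}
    (h₀ : ι K α₀ * τ ≠ 0) (h₀₁ : ι K α₁ * (ι K α₀ * τ) = 0) :
    α₁ ∈ wedgeAnnihilator τ ⊔ K ∙ α₀ := by
  by_contra h₁
  have hU : wedgeAnnihilator τ ⊔ K ∙ α₀ ⊔ K ∙ α₁ ≤ wedgeAnnihilator (ι K α₀ * τ) := by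
    refine sup_le (sup_le (wedgeAnnihilator_le_ι_mul α₀ τ) ?_) ?_ <;>
      rw [Submodule.span_singleton_le_iff_mem]
    · exact self_mem_wedgeAnnihilator_ι_mul α₀ τ
    · exact h₀₁
  have hrank := Submodule.finrank_mono hU
  rw [Submodule.finrank_sup_span_singleton h₁, Submodule.finrank_sup_span_singleton h₀] at hrank
  exact h₀ (eq_zero_of_finrank_le_finrank_wedgeAnnihilator_add_one
    (ι_mul_mem_exteriorPower α₀ hτ) (by omega) (by omega))

end Field
end ExteriorAlgebra

open ExteriorAlgebra in
/-- a 2-form σ of rank 2n−4 on a (2n−1)-dimensional space over a field of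
characteristic 0, and covectors α₀, α₁ with αᵢ ∧ σ^{n-2} ≠ 0 and α₁ ∧ α₀ ∧ σ^{n-2} = 0;
then α₁ ∧ σ^{n-2} = B • (α₀ ∧ σ^{n-2}) for some nonzero scalar B. -/
theorem stmt_3 {K : Type*} [Field K] [CharZero K] {V : Type*} [AddCommGroup V] [Module K V]
    [FiniteDimensional K V] (n : ℕ) (hn : 2 ≤ n)
    (hdim : Module.finrank K V = 2 * n - 1)
    (σ : ExteriorAlgebra K (Module.Dual K V)) (hσ : σ ∈ ⋀[K]^2 (Module.Dual K V))
    (hrank1 : σ ^ (n - 2) ≠ 0) (hrank2 : σ ^ (n - 1) = 0)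
    (α₀ α₁ : Module.Dual K V)
    (h0 : ι K α₀ * σ ^ (n - 2) ≠ 0)
    (h1 : ι K α₁ * σ ^ (n - 2) ≠ 0)
    (h01 : ι K α₁ * (ι K α₀ * σ ^ (n - 2)) = 0) :
    ∃ B : K, B ≠ 0 ∧ ι K α₁ * σ ^ (n - 2) = B • (ι K α₀ * σ ^ (n - 2)) := by
  have hD : Module.finrank K (Module.Dual K V) = 2 * n - 1 := by
    rw [Subspace.dual_finrank_eq, hdim]
  have hτ : σ ^ (n - 2) ∈ ⋀[K]^(2 * (n - 2)) (Module.Dual K V) := by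
    rw [mul_comm, ← smul_eq_mul]
    exact SetLike.pow_mem_graded _ hσ
  have hrank :=
    le_finrank_wedgeAnnihilator_pow hσ hrank1 (by rwa [show n - 2 + 1 = n - 1 by omega])
  obtain ⟨w, hw, _, hB, rfl⟩ := Submodule.mem_sup.mp
    (mem_wedgeAnnihilator_sup_span_singleton hτ (by omega) (by omega) h0 h01)
  obtain ⟨B, rfl⟩ := Submodule.mem_span_singleton.mp hB
  have hα₁ : ι K (w + B • α₀) * σ ^ (n - 2) = B • (ι K α₀ * σ ^ (n - 2)) := by
    rw [map_add, add_mul, mem_wedgeAnnihilator.mp hw, zero_add, map_smul, smul_mul_assoc]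
  refine ⟨B, fun hB0 => h1 ?_, hα₁⟩
  rw [hα₁, hB0, zero_smul]
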